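/- Let $B : U \to (0,\infty)$ be a smooth positive function on an open set $U \subseteq \mathbb{C}$. If for every $\alpha \in \mathbb{C}$ the function $t \mapsto e^{\mathrm{Re}(\alpha t)} B(t)$ satisfies $\frac{\partial^2}{\partial t \partial \bar t}\big(e^{\mathrm{Re}(\alpha t)} B(t)\big) \geq \varepsilon_0\, e^{\mathrm{Re}(\alpha t)} B(t)$ pointwise, then $\frac{\partial^2 \log B}{\partial t \partial \bar t} \geq \varepsilon_0$ on $U$. -/

import Mathlib

open Complex Topology Filter

/-- Wirtinger derivative `∂/∂t` on `ℂ`. -/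
noncomputable def wd1 (f : ℂ → ℂ) (t : ℂ) : ℂ :=
  (1 / 2 : ℂ) * (lineDeriv ℝ f t 1 - Complex.I * lineDeriv ℝ f t Complex.I)

/-- Conjugate Wirtinger derivative `∂/∂t̄` on `ℂ`. -/
noncomputable def wd1Bar (f : ℂ → ℂ) (t : ℂ) : ℂ :=
  (1 / 2 : ℂ) * (lineDeriv ℝ f t 1 + Complex.I * lineDeriv ℝ f t Complex.I)

lemma wd1_eq (f : ℂ → ℂ) (t : ℂ) (hf : DifferentiableAt ℝ f t) :
    wd1 f t = (1 / 2 : ℂ) * (fderiv ℝ f t 1 - Complex.I * fderiv ℝ f t Complex.I) := by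
  rw [wd1, hf.lineDeriv_eq_fderiv, hf.lineDeriv_eq_fderiv]

lemma wd1Bar_eq (f : ℂ → ℂ) (t : ℂ) (hf : DifferentiableAt ℝ f t) :
    wd1Bar f t = (1 / 2 : ℂ) * (fderiv ℝ f t 1 + Complex.I * fderiv ℝ f t Complex.I) := by
  rw [wd1Bar, hf.lineDeriv_eq_fderiv, hf.lineDeriv_eq_fderiv]

lemma coe_fderiv (g : ℂ → ℝ) (t v : ℂ) (hg : DifferentiableAt ℝ g t) :
    fderiv ℝ (fun s => ((g s : ℝ) : ℂ)) t v = ((fderiv ℝ g t v : ℝ) : ℂ) := by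
  have h : fderiv ℝ (fun s => ((g s : ℝ) : ℂ)) t = Complex.ofRealCLM.comp (fderiv ℝ g t) :=
    (Complex.ofRealCLM.hasFDerivAt.comp t hg.hasFDerivAt).fderiv
  rw [h]; rfl

lemma coe_diff (g : ℂ → ℝ) (t : ℂ) (hg : DifferentiableAt ℝ g t) :
    DifferentiableAt ℝ (fun s => ((g s : ℝ) : ℂ)) t :=
  Complex.ofRealCLM.differentiableAt.comp t hg

lemma wd1wd1Bar_congr (f₁ f₂ : ℂ → ℂ) (t : ℂ) (h : f₁ =ᶠ[𝓝 t] f₂) :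
    wd1 (wd1Bar f₁) t = wd1 (wd1Bar f₂) t := by
  have h2 : wd1Bar f₁ =ᶠ[𝓝 t] wd1Bar f₂ := by
    obtain ⟨O, hfO, hO_open, htO⟩ := eventually_nhds_iff.1 h
    filter_upwards [hO_open.mem_nhds htO] with s hs
    have : f₁ =ᶠ[𝓝 s] f₂ := eventually_nhds_iff.2 ⟨O, hfO, hO_open, hs⟩
    rw [wd1Bar, wd1Bar, this.lineDeriv_eq, this.lineDeriv_eq]
  rw [wd1, wd1, h2.lineDeriv_eq, h2.lineDeriv_eq]

lemma dv_diff (g : ℂ → ℝ) (V : Set ℂ) (hV : IsOpen V) (t : ℂ) (ht : t ∈ V)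
    (hg : ContDiffOn ℝ (⊤ : ℕ∞) g V) (v : ℂ) :
    DifferentiableAt ℝ (fun s => fderiv ℝ g s v) t := by
  have h2 : ContDiffAt ℝ 1 (fderiv ℝ g) t :=
    (hg.contDiffAt (hV.mem_nhds ht)).fderiv_right (by exact WithTop.coe_le_coe.mpr le_top)
  exact (h2.differentiableAt one_ne_zero).clm_apply (differentiableAt_const v)

lemma master (g : ℂ → ℝ) (V : Set ℂ) (hV : IsOpen V) (t : ℂ) (ht : t ∈ V)
    (hg : ContDiffOn ℝ (⊤ : ℕ∞) g V) :
    (wd1 (wd1Bar (fun s => ((g s : ℝ) : ℂ))) t).re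
      = (1/4) * (fderiv ℝ (fun s => fderiv ℝ g s 1) t 1
          + fderiv ℝ (fun s => fderiv ℝ g s Complex.I) t Complex.I) := by
  have hdiff : ∀ s ∈ V, DifferentiableAt ℝ g s := fun s hs =>
    (hg.contDiffAt (hV.mem_nhds hs)).differentiableAt (by simp)
  have hdv : ∀ v : ℂ, DifferentiableAt ℝ (fun s => fderiv ℝ g s v) t := fun v =>
    dv_diff g V hV t ht hg v
  set G : ℂ → ℂ := fun s =>
    (1 / 2 : ℂ) * (((fderiv ℝ g s 1 : ℝ) : ℂ) + Complex.I * ((fderiv ℝ g s Complex.I : ℝ) : ℂ))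
    with hG
  have hEq : wd1Bar (fun s => ((g s : ℝ) : ℂ)) =ᶠ[𝓝 t] G := by
    filter_upwards [hV.mem_nhds ht] with s hs
    rw [wd1Bar_eq _ _ (coe_diff g s (hdiff s hs)), coe_fderiv g s 1 (hdiff s hs),
      coe_fderiv g s Complex.I (hdiff s hs)]
  have hstep : wd1 (wd1Bar (fun s => ((g s : ℝ) : ℂ))) t = wd1 G t := by
    rw [wd1, wd1, hEq.lineDeriv_eq, hEq.lineDeriv_eq]
  rw [hstep]
  have hA : DifferentiableAt ℝ (fun s => ((fderiv ℝ g s 1 : ℝ) : ℂ)) t := coe_diff _ t (hdv 1)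
  have hB : DifferentiableAt ℝ (fun s => ((fderiv ℝ g s Complex.I : ℝ) : ℂ)) t :=
    coe_diff _ t (hdv Complex.I)
  have hGdiff : DifferentiableAt ℝ G t := by
    apply DifferentiableAt.const_mul
    exact hA.add (hB.const_mul Complex.I)
  have hGder : ∀ w : ℂ, fderiv ℝ G t w =
      (1 / 2 : ℂ) * (((fderiv ℝ (fun s => fderiv ℝ g s 1) t w : ℝ) : ℂ)
        + Complex.I * ((fderiv ℝ (fun s => fderiv ℝ g s Complex.I) t w : ℝ) : ℂ)) := by
    intro w
    rw [hG]
    rw [fderiv_const_mul (a := fun s => ((fderiv ℝ g s 1 : ℝ) : ℂ) + Complex.I * ((fderiv ℝ g s Complex.I : ℝ) : ℂ)) (hA.add (hB.const_mul Complex.I))]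
    simp only [ContinuousLinearMap.smul_apply]
    rw [fderiv_fun_add hA (hB.const_mul Complex.I)]
    simp only [ContinuousLinearMap.add_apply]
    rw [fderiv_const_mul hB Complex.I]
    simp only [ContinuousLinearMap.smul_apply]
    rw [coe_fderiv _ t w (hdv 1), coe_fderiv _ t w (hdv Complex.I)]
    simp [smul_eq_mul]
  rw [wd1_eq G t hGdiff, hGder 1, hGder Complex.I]
  simp [Complex.ext_iff]
  ring

lemma d2_exp (w : ℂ → ℝ) (V : Set ℂ) (hV : IsOpen V) (t : ℂ) (ht : t ∈ V)
    (hw : ContDiffOn ℝ (⊤ : ℕ∞) w V) (v : ℂ) :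
    fderiv ℝ (fun s => fderiv ℝ (fun x => Real.exp (w x)) s v) t v
      = Real.exp (w t) * (fderiv ℝ (fun s => fderiv ℝ w s v) t v
          + fderiv ℝ w t v * fderiv ℝ w t v) := by
  have hdiff : ∀ s ∈ V, DifferentiableAt ℝ w s := fun s hs =>
    (hw.contDiffAt (hV.mem_nhds hs)).differentiableAt (by simp)
  have hEq : (fun s => fderiv ℝ (fun x => Real.exp (w x)) s v)
      =ᶠ[𝓝 t] fun s => Real.exp (w s) * fderiv ℝ w s v := by
    filter_upwards [hV.mem_nhds ht] with s hs
    rw [fderiv_exp (hdiff s hs)]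
    simp [smul_eq_mul]
  rw [hEq.fderiv_eq]
  have hexp : DifferentiableAt ℝ (fun s => Real.exp (w s)) t := (hdiff t ht).exp
  have hdv : DifferentiableAt ℝ (fun s => fderiv ℝ w s v) t := dv_diff w V hV t ht hw v
  rw [fderiv_fun_mul hexp hdv]
  simp only [ContinuousLinearMap.add_apply, ContinuousLinearMap.smul_apply, smul_eq_mul]
  rw [fderiv_exp (hdiff t ht)]
  simp only [ContinuousLinearMap.smul_apply, smul_eq_mul]
  ring

noncomputable def Lc (α : ℂ) : ℂ →L[ℝ] ℝ :=
  Complex.reCLM.comp (((ContinuousLinearMap.mul ℂ ℂ) α).restrictScalars ℝ)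

lemma Lc_apply (α v : ℂ) : Lc α v = (α * v).re := rfl

lemma Lc_contDiffOn (α : ℂ) (V : Set ℂ) : ContDiffOn ℝ (⊤ : ℕ∞) (fun s => (α * s).re) V :=
  (Lc α).contDiff.contDiffOn

lemma fderiv_lin_add (α : ℂ) (u : ℂ → ℝ) (s : ℂ) (hu : DifferentiableAt ℝ u s) (v : ℂ) :
    fderiv ℝ (fun x => (α * x).re + u x) s v = (α * v).re + fderiv ℝ u s v := by
  have h1 : DifferentiableAt ℝ (fun x => (α * x).re) s := (Lc α).differentiableAt
  rw [fderiv_fun_add h1 hu]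
  simp only [ContinuousLinearMap.add_apply]
  congr 1
  have h : fderiv ℝ (fun x => (α * x).re) s = Lc α := (Lc α).fderiv
  rw [h, Lc_apply]

/-- one-variable reduction in the proof of Claim 4.1.
If `B : U → (0,∞)` is smooth on an open `U ⊆ ℂ` and for every `α ∈ ℂ` the twisted
function `t ↦ e^{Re(α t)} B(t)` satisfies
`∂²/∂t∂t̄ (e^{Re(α t)} B) ≥ ε₀ e^{Re(α t)} B` pointwise on `U`,
then `∂² log B / ∂t∂t̄ ≥ ε₀` on `U`. -/
theorem stmt1 (U : Set ℂ) (hU : IsOpen U)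
    (B : ℂ → ℝ) (hBsmooth : ContDiffOn ℝ (⊤ : ℕ∞) B U) (hBpos : ∀ t ∈ U, 0 < B t)
    (ε0 : ℝ) (hε0 : 0 ≤ ε0)
    (hyp : ∀ (α : ℂ) (t : ℂ), t ∈ U →
      ε0 * (Real.exp ((α * t).re) * B t) ≤
        (wd1 (wd1Bar (fun s => ((Real.exp ((α * s).re) * B s : ℝ) : ℂ))) t).re) :
    ∀ t ∈ U, ε0 ≤ (wd1 (wd1Bar (fun s => ((Real.log (B s) : ℝ) : ℂ))) t).re := by
  intro t ht
  set u : ℂ → ℝ := fun s => Real.log (B s) with hu_def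
  have hu : ContDiffOn ℝ (⊤ : ℕ∞) u U := hBsmooth.log (fun x hx => (hBpos x hx).ne')
  have hudiff : ∀ s ∈ U, DifferentiableAt ℝ u s := fun s hs =>
    (hu.contDiffAt (hU.mem_nhds hs)).differentiableAt (by simp)
  set α : ℂ := ((-(fderiv ℝ u t 1) : ℝ) : ℂ) + ((fderiv ℝ u t Complex.I : ℝ) : ℂ) * Complex.I
    with hα
  have hα1 : (α * 1).re = -(fderiv ℝ u t 1) := by simp [hα]
  have hαI : (α * Complex.I).re = -(fderiv ℝ u t Complex.I) := by
    simp [hα, Complex.mul_re]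
  set w : ℂ → ℝ := fun s => (α * s).re + u s with hw_def
  have hw : ContDiffOn ℝ (⊤ : ℕ∞) w U := (Lc_contDiffOn α U).add hu
  -- the hypothesis function agrees with exp ∘ w near t
  have hEqf : (fun s => ((Real.exp ((α * s).re) * B s : ℝ) : ℂ))
      =ᶠ[𝓝 t] (fun s => ((Real.exp (w s) : ℝ) : ℂ)) := by
    filter_upwards [hU.mem_nhds ht] with s hs
    have : Real.exp (w s) = Real.exp ((α * s).re) * B s := by
      rw [hw_def]
      simp only
      rw [Real.exp_add, hu_def]
      simp only
      rw [Real.exp_log (hBpos s hs)]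
    rw [this]
  -- derivative identities for w
  have hwd : ∀ v : ℂ, fderiv ℝ w t v = (α * v).re + fderiv ℝ u t v :=
    fun v => fderiv_lin_add α u t (hudiff t ht) v
  have hwd1 : fderiv ℝ w t 1 = 0 := by rw [hwd 1, hα1]; ring
  have hwdI : fderiv ℝ w t Complex.I = 0 := by rw [hwd Complex.I, hαI]; ring
  have hD2 : ∀ v : ℂ, fderiv ℝ (fun s => fderiv ℝ w s v) t v
      = fderiv ℝ (fun s => fderiv ℝ u s v) t v := by
    intro v
    have hEv : (fun s => fderiv ℝ w s v) =ᶠ[𝓝 t] fun s => (α * v).re + fderiv ℝ u s v := by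
      filter_upwards [hU.mem_nhds ht] with s hs
      exact fderiv_lin_add α u s (hudiff s hs) v
    rw [hEv.fderiv_eq, fderiv_const_add]
  -- compute the RHS of the hypothesis
  have hweq : Real.exp (w t) = Real.exp ((α * t).re) * B t := by
    rw [hw_def]; simp only
    rw [Real.exp_add, hu_def]; simp only
    rw [Real.exp_log (hBpos t ht)]
  have hm1 : (wd1 (wd1Bar (fun s => ((Real.exp ((α * s).re) * B s : ℝ) : ℂ))) t).re
      = Real.exp (w t) * ((1/4) * (fderiv ℝ (fun s => fderiv ℝ u s 1) t 1
          + fderiv ℝ (fun s => fderiv ℝ u s Complex.I) t Complex.I)) := by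
    rw [wd1wd1Bar_congr _ _ t hEqf]
    rw [master (fun x => Real.exp (w x)) U hU t ht (hw.exp)]
    rw [d2_exp w U hU t ht hw 1, d2_exp w U hU t ht hw Complex.I,
      hwd1, hwdI, hD2 1, hD2 Complex.I]
    ring
  have hm2 : (wd1 (wd1Bar (fun s => ((Real.log (B s) : ℝ) : ℂ))) t).re
      = (1/4) * (fderiv ℝ (fun s => fderiv ℝ u s 1) t 1
          + fderiv ℝ (fun s => fderiv ℝ u s Complex.I) t Complex.I) :=
    master u U hU t ht hu
  have hc : 0 < Real.exp ((α * t).re) * B t :=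
    mul_pos (Real.exp_pos _) (hBpos t ht)
  have h := hyp α t ht
  rw [hm1, hweq] at h
  rw [hm2]
  rw [mul_comm (Real.exp ((α * t).re) * B t)] at h
  exact le_of_mul_le_mul_right h hc
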